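/- arXiv:math/0204185 — 6 statements merged into one kernel-verified Lean document; each statement's English description precedes it below -/
import Mathlib

section
/- The monomials A_{i,s} are multiplicatively independent: if v : I × ℤ → ℤ is finitely supported and ∑_{(i,s) ∈ I × ℤ} v(i,s)·A_{i,s} = 0 as a function on I × ℤ, then v = 0. (This is the invertibility statement making the exponents v_{i,s}(m, m'), defined by m = m' − ∑ v(i,s)·A_{i,s}, well defined.) -/
/-
Every `A_{j,t}` is supported in levels `t - 1, t, t + 1`, and takes the value `1` at its top
point `(j, t + 1)`. So in a vanishing combination `∑ v(j,t) A_{j,t}`, evaluating at `(i, s + 1)`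
for a point `(i, s)` of the support of `v` of maximal level `s` picks out `v(i,s)` alone.
-/

open Finsupp

/-- The exponent function of the monomial
`A_{i,q^s} = Y_{i,q^{s+1}} Y_{i,q^{s-1}} ∏_{j ≠ i} Y_{j,q^s}^{C j i}`:
value `1` at `(i, s+1)` and `(i, s-1)`, value `C j i` at `(j, s)` for `j ≠ i`,
and `0` elsewhere. -/
noncomputable def Amon {I : Type*} [Fintype I] [DecidableEq I]
    (C : I → I → ℤ) (i : I) (s : ℤ) : (I × ℤ) →₀ ℤ :=
  Finsupp.single (i, s + 1) 1 + Finsupp.single (i, s - 1) 1 +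
    ∑ j ∈ Finset.univ.erase i, Finsupp.single (j, s) (C j i)

section

variable {I : Type*} [Fintype I] [DecidableEq I] (C : I → I → ℤ)

theorem Amon_apply_succ_of_le {j i : I} {t s : ℤ} (hts : t ≤ s) :
    Amon C j t (i, s + 1) = if (j, t) = (i, s) then 1 else 0 := by
  have hlow : ∀ k, Finsupp.single (k, t) (C k j) (i, s + 1) = 0 := fun k =>
    single_eq_of_ne (ne_of_apply_ne Prod.snd (by dsimp only; omega))
  have hmid : Finsupp.single (j, t - 1) (1 : ℤ) (i, s + 1) = 0 :=
    single_eq_of_ne (ne_of_apply_ne Prod.snd (by dsimp only; omega))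
  simp only [Amon, Finsupp.add_apply, finsetSum_apply, hlow, hmid, Finset.sum_const_zero,
    add_zero, single_apply, Prod.mk.injEq, add_left_inj]

theorem sum_smul_Amon_apply_succ (v : (I × ℤ) →₀ ℤ) {i : I} {s : ℤ}
    (hv : ∀ q ∈ v.support, q.2 ≤ s) :
    (v.sum fun p n => n • Amon C p.1 p.2) (i, s + 1) = v (i, s) := by
  rw [Finsupp.sum_apply, Finsupp.sum, Finset.sum_eq_single (i, s)]
  · simp [Amon_apply_succ_of_le C le_rfl]
  · rintro ⟨j, t⟩ hjt hne
    simp [Amon_apply_succ_of_le C (hv _ hjt), hne]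
  · intro hnot
    simp [notMem_support_iff.1 hnot]

end

theorem Amon_independent_general {I : Type*} [Fintype I] [DecidableEq I]
    (C : I → I → ℤ)
    (v : (I × ℤ) →₀ ℤ)
    (hv : (v.sum fun p n => n • Amon C p.1 p.2) = 0) :
    v = 0 := by
  by_contra hne
  obtain ⟨⟨i, s⟩, hmem, hmax⟩ :=
    Finset.exists_max_image v.support Prod.snd (support_nonempty_iff.2 hne)
  have htop := sum_smul_Amon_apply_succ C v (i := i) hmax
  rw [hv, Finsupp.zero_apply] at htop
  exact mem_support_iff.1 hmem htop.symm

/-- The monomials `A_{i,s}` are multiplicatively independent: if a finitely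
supported integral combination of them vanishes, all the coefficients vanish. -/
theorem Amon_independent {I : Type*} [Fintype I] [DecidableEq I]
    (C : I → I → ℤ)
    (hsym : ∀ i j, C i j = C j i)
    (hdiag : ∀ i, C i i = 2)
    (hoff : ∀ i j, i ≠ j → C i j = 0 ∨ C i j = -1)
    (v : (I × ℤ) →₀ ℤ)
    (hv : (v.sum fun p n => n • Amon C p.1 p.2) = 0) :
    v = 0 :=
  Amon_independent_general C v hv
end

section
/- For every finitely supported function u : I × ℤ → ℤ there exists a unique function ũ : I × ℤ → ℤ such that (i) there is N ∈ ℤ with ũ(i,s) = 0 for all i ∈ I and all s ≤ N, and (ii) for every (i,s) ∈ I × ℤ one has u(i,s) = ũ(i,s−1) + ũ(i,s+1) + ∑_{j ≠ i} (C i j)·ũ(j,s) (equivalently, u(i,s) = ũ(i,s−1) + ũ(i,s+1) − ∑_{j : C i j = −1} ũ(j,s)). -/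
/-!
Solved for `ũ (i, s + 1)`, the relation is a second-order recurrence in `s` for the vectors
`ũ (·, s) : I → ℤ`. Below the support of `u` the zero vector solves it, so a solution vanishing
far to the left is determined by forward recursion, and any two such solutions agree by induction
upwards from a common vanishing point.
-/

open Finset

section SecondOrderRecurrence

variable {V : Type*} [Zero V]

/-- Solution of `x (s + 1) = F s (x (s - 1)) (x s)` started from zero at `N - 1` and `N`,
indexed so that `solveFrom F N n = x (N - 1 + n)`. -/
def solveFrom (F : ℤ → V → V → V) (N : ℤ) : ℕ → V
  | 0 => 0
  | 1 => 0
  | n + 2 => F (N + n) (solveFrom F N n) (solveFrom F N (n + 1))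

theorem exists_recurrence_solution (F : ℤ → V → V → V) (N : ℤ) (hF : ∀ s < N, F s 0 0 = 0) :
    ∃ x : ℤ → V, (∀ s ≤ N, x s = 0) ∧ ∀ s, x (s + 1) = F s (x (s - 1)) (x s) := by
  refine ⟨fun s => solveFrom F N (s - N + 1).toNat, fun s hs => ?_, fun s => ?_⟩
  · obtain h | h : (s - N + 1).toNat = 0 ∨ (s - N + 1).toNat = 1 := by omega
    all_goals simp only [h, solveFrom]
  rcases lt_or_ge s N with hs | hs
  · obtain ⟨h₀, h₁⟩ : (s - 1 - N + 1).toNat = 0 ∧ (s - N + 1).toNat = 0 := by omega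
    obtain h₂ | h₂ : (s + 1 - N + 1).toNat = 0 ∨ (s + 1 - N + 1).toNat = 1 := by omega
    all_goals simp only [h₀, h₁, h₂, solveFrom, hF s hs]
  · obtain ⟨n, rfl⟩ : ∃ n : ℕ, s = N + n := ⟨(s - N).toNat, by omega⟩
    obtain ⟨h₀, h₁, h₂⟩ : (N + n - 1 - N + 1).toNat = n ∧ (N + n - N + 1).toNat = n + 1 ∧
        (N + n + 1 - N + 1).toNat = n + 2 := by omega
    dsimp only
    rw [h₀, h₁, h₂, solveFrom]

theorem recurrence_solution_unique (F : ℤ → V → V → V) {x y : ℤ → V} (M : ℤ)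
    (hx₀ : ∀ s ≤ M, x s = 0) (hy₀ : ∀ s ≤ M, y s = 0)
    (hx : ∀ s, x (s + 1) = F s (x (s - 1)) (x s)) (hy : ∀ s, y (s + 1) = F s (y (s - 1)) (y s)) :
    x = y := by
  have agree : ∀ s ≥ M, x (s - 1) = y (s - 1) ∧ x s = y s := by
    intro s hs
    induction s, hs using Int.leInduction with
    | base => exact ⟨by rw [hx₀ _ (by omega), hy₀ _ (by omega)], by rw [hx₀ M le_rfl, hy₀ M le_rfl]⟩
    | succ s _ ih => exact ⟨by simpa using ih.2, by rw [hx, hy, ih.1, ih.2]⟩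
  funext s
  rcases le_or_gt s M with hs | hs
  · rw [hx₀ s hs, hy₀ s hs]
  · exact (agree s hs.le).2

theorem existsUnique_recurrence_solution (F : ℤ → V → V → V) (N : ℤ)
    (hF : ∀ s < N, F s 0 0 = 0) :
    ∃! x : ℤ → V, (∃ M : ℤ, ∀ s ≤ M, x s = 0) ∧ ∀ s, x (s + 1) = F s (x (s - 1)) (x s) := by
  obtain ⟨x, hx₀, hx⟩ := exists_recurrence_solution F N hF
  refine ⟨x, ⟨⟨N, hx₀⟩, hx⟩, fun y ⟨⟨M, hy₀⟩, hy⟩ => ?_⟩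
  exact recurrence_solution_unique F (min M N) (fun s hs => hy₀ s (hs.trans (min_le_left _ _)))
    (fun s hs => hx₀ s (hs.trans (min_le_right _ _))) hy hx

end SecondOrderRecurrence

theorem Finsupp.exists_forall_snd_lt_eq_zero {α β M : Type*} [LinearOrder β] [Nonempty β]
    [Zero M] (f : α × β →₀ M) : ∃ N : β, ∀ a, ∀ b < N, f (a, b) = 0 := by
  obtain ⟨N, hN⟩ := (f.support.image Prod.snd).bddBelow
  exact ⟨N, fun a b hb => Finsupp.notMem_support_iff.mp fun h =>
    hb.not_ge (hN (mem_image_of_mem Prod.snd h))⟩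

theorem utilde_existsUnique_general {I : Type*} [Fintype I] [DecidableEq I]
    (C : I → I → ℤ)
    (u : (I × ℤ) →₀ ℤ) :
    ∃! t : I × ℤ → ℤ,
      (∃ N : ℤ, ∀ i : I, ∀ s : ℤ, s ≤ N → t (i, s) = 0) ∧
      (∀ i : I, ∀ s : ℤ,
        u (i, s) = t (i, s - 1) + t (i, s + 1) +
          ∑ j ∈ Finset.univ.erase i, C i j * t (j, s)) := by
  obtain ⟨N, hu⟩ := u.exists_forall_snd_lt_eq_zero
  let F : ℤ → (I → ℤ) → (I → ℤ) → I → ℤ := fun s a b i =>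
    u (i, s) - a i - ∑ j ∈ univ.erase i, C i j * b j
  have hF : ∀ s < N, F s 0 0 = 0 := fun s hs => funext fun i => by simp [F, hu i s hs]
  let e : (I × ℤ → ℤ) ≃ (ℤ → I → ℤ) := (Equiv.curry I ℤ ℤ).trans (Equiv.piComm _)
  have he : ∀ t s i, e t s i = t (i, s) := fun _ _ _ => rfl
  refine (e.existsUnique_congr fun t => and_congr ?_ ?_).mpr
    (existsUnique_recurrence_solution F N hF)
  · exact exists_congr fun M => ⟨fun h s hs => funext fun i => h i s hs,
      fun h i s hs => congrFun (h s hs) i⟩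
  · refine ⟨fun h s => funext fun i => ?_, fun h i s => ?_⟩
    · simp only [he, F]
      linarith [h i s]
    · have := congrFun (h s) i
      simp only [he, F] at this
      linarith

/-- For every finitely supported `u : I × ℤ → ℤ` there is a unique
`ũ : I × ℤ → ℤ` vanishing for all sufficiently small second arguments and
satisfying `u (i,s) = ũ (i,s-1) + ũ (i,s+1) + ∑_{j ≠ i} (C i j) ũ (j,s)`
for all `(i,s)`. -/
theorem utilde_existsUnique {I : Type*} [Fintype I] [DecidableEq I]
    (C : I → I → ℤ)
    (hsym : ∀ i j, C i j = C j i)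
    (hdiag : ∀ i, C i i = 2)
    (hoff : ∀ i j, i ≠ j → C i j = 0 ∨ C i j = -1)
    (u : (I × ℤ) →₀ ℤ) :
    ∃! t : I × ℤ → ℤ,
      (∃ N : ℤ, ∀ i : I, ∀ s : ℤ, s ≤ N → t (i, s) = 0) ∧
      (∀ i : I, ∀ s : ℤ,
        u (i, s) = t (i, s - 1) + t (i, s + 1) +
          ∑ j ∈ Finset.univ.erase i, C i j * t (j, s)) :=
  utilde_existsUnique_general C u
end

section
/- Let m_{P¹}, m_{P²} be l-dominant monomials and v¹, v² : I × ℤ → ℕ finitely supported, and set m¹ = m_{P¹} − ∑_{(i,s)} v¹(i,s)·A_{i,s} and m² = m_{P²} − ∑_{(i,s)} v²(i,s)·A_{i,s}. Then the two (finite) sums ∑_{(i,s) ∈ I × ℤ} ( v¹(i,s+1)·m²(i,s) + m_{P¹}(i,s+1)·v²(i,s) ) and ∑_{(i,s) ∈ I × ℤ} ( m¹(i,s)·v²(i,s−1) + v¹(i,s)·m_{P²}(i,s−1) ) are equal; their common value is the quantity d(m¹, m_{P¹}; m², m_{P²}). -/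
open Finsupp

/-!
Write `S v = ∑ v(q) A_q` and shift the second sum by `s ↦ s + 1`. The terms involving only
`m_{P¹}`, `m_{P²}` then agree, and the two sides differ by
`∑_{p,q} v¹(p) v²(q) (A_p(q + 1) − A_q(p − 1))`, which vanishes because the symmetry of `C`
gives `A_{i,s}(j, t + 1) = A_{j,t}(i, s − 1)`.
-/

lemma Amon_apply {I : Type*} [Fintype I] [DecidableEq I]
    (C : I → I → ℤ) (i : I) (s : ℤ) (j : I) (u : ℤ) :
    Amon C i s (j, u) =
      if j = i then (if u = s + 1 then 1 else 0) + (if u = s - 1 then 1 else 0)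
      else if u = s then C j i else 0 := by
  by_cases hji : j = i <;>
    simp [Amon, single_apply, hji, ite_and, eq_comm (a := u)]

lemma Amon_apply_add_one {I : Type*} [Fintype I] [DecidableEq I]
    {C : I → I → ℤ} (hsym : ∀ i j, C i j = C j i) (i : I) (s : ℤ) (j : I) (t : ℤ) :
    Amon C i s (j, t + 1) = Amon C j t (i, s - 1) := by
  rw [Amon_apply, Amon_apply, hsym]
  by_cases hij : i = j
  · subst hij
    simp only [if_true]
    split_ifs <;> omega
  · simp only [hij, Ne.symm hij, if_false]
    split_ifs <;> omega

section

variable {α R : Type*} [CommRing R] {e : α ≃ α} {A : α → α →₀ R}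

lemma finsum_natCast_mul (u : α →₀ ℕ) (f : α → R) :
    ∑ᶠ p, (u p : R) * f p = u.sum fun p n => (n : R) * f p :=
  finsum_eq_sum_of_support_subset _ fun _ hp => mem_support_iff.2 fun hu => hp (by simp [hu])

lemma finsum_apply_mul_sum_smul_comm (hA : ∀ p q, A p (e q) = A q (e.symm p))
    (u w : α →₀ ℕ) :
    ∑ᶠ p, (u (e p) : R) * (w.sum fun q n => (n : R) • A q) p
      = ∑ᶠ p, (u.sum fun q n => (n : R) • A q) (e p) * w p := by
  rw [← finsum_comp_equiv e.symm]
  simp only [Equiv.apply_symm_apply]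
  simp_rw [mul_comm _ (w _ : R), finsum_natCast_mul, Finsupp.sum_apply, Finsupp.smul_apply,
    smul_eq_mul, mul_sum, hA]
  rw [Finsupp.sum_comm]
  simp only [mul_left_comm]

lemma finsum_apply_mul_sub_sum_smul_comm (hA : ∀ p q, A p (e q) = A q (e.symm p))
    (mP1 mP2 : α →₀ R) (v1 v2 : α →₀ ℕ) :
    ∑ᶠ p, ((v1 (e p) : R) * (mP2 - v2.sum fun q n => (n : R) • A q) p + mP1 (e p) * v2 p)
      = ∑ᶠ p, ((mP1 - v1.sum fun q n => (n : R) • A q) (e p) * v2 p + v1 (e p) * mP2 p) := by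
  set S1 := v1.sum fun q n => (n : R) • A q
  set S2 := v2.sum fun q n => (n : R) • A q
  have hdiff (p : α) :
      ((v1 (e p) : R) * (mP2 - S2) p + mP1 (e p) * v2 p)
        - ((mP1 - S1) (e p) * v2 p + v1 (e p) * mP2 p)
      = S1 (e p) * v2 p - v1 (e p) * S2 p := by
    simp only [coe_sub, Pi.sub_apply]
    ring
  rw [← sub_eq_zero,
    ← finsum_sub_distrib (by fun_prop (disch := simp)) (by fun_prop (disch := simp)),
    finsum_congr hdiff,
    finsum_sub_distrib (by fun_prop (disch := simp)) (by fun_prop (disch := simp)),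
    finsum_apply_mul_sum_smul_comm hA, sub_self]

end

theorem d_well_defined_general {I : Type*} [Fintype I] [DecidableEq I]
    (C : I → I → ℤ)
    (hsym : ∀ i j, C i j = C j i)
    (mP1 mP2 : (I × ℤ) →₀ ℤ)
    (v1 v2 : (I × ℤ) →₀ ℕ)
    (m1 m2 : (I × ℤ) →₀ ℤ)
    (hm1 : m1 = mP1 - v1.sum fun p n => (n : ℤ) • Amon C p.1 p.2)
    (hm2 : m2 = mP2 - v2.sum fun p n => (n : ℤ) • Amon C p.1 p.2) :
    ∑ᶠ p : I × ℤ, ((v1 (p.1, p.2 + 1) : ℤ) * m2 p + mP1 (p.1, p.2 + 1) * (v2 p : ℤ))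
      = ∑ᶠ p : I × ℤ, (m1 p * (v2 (p.1, p.2 - 1) : ℤ) + (v1 p : ℤ) * mP2 (p.1, p.2 - 1)) := by
  subst hm1 hm2
  let τ : I × ℤ ≃ I × ℤ := (Equiv.refl I).prodCongr (Equiv.addRight 1)
  calc _ = _ := finsum_apply_mul_sub_sum_smul_comm (e := τ)
        (fun p q => Amon_apply_add_one hsym p.1 p.2 q.1 q.2) mP1 mP2 v1 v2
    _ = _ := by
      conv_rhs => rw [← finsum_comp_equiv τ]
      simp [τ]

/-- The two expressions defining `d(m¹, m_{P¹}; m², m_{P²})` agree: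
`∑ (v¹(i,s+1)·m²(i,s) + m_{P¹}(i,s+1)·v²(i,s))
  = ∑ (m¹(i,s)·v²(i,s-1) + v¹(i,s)·m_{P²}(i,s-1))`. -/
theorem d_well_defined {I : Type*} [Fintype I] [DecidableEq I]
    (C : I → I → ℤ)
    (hsym : ∀ i j, C i j = C j i)
    (hdiag : ∀ i, C i i = 2)
    (hoff : ∀ i j, i ≠ j → C i j = 0 ∨ C i j = -1)
    (mP1 mP2 : (I × ℤ) →₀ ℤ)
    (hP1 : ∀ p : I × ℤ, 0 ≤ mP1 p) (hP2 : ∀ p : I × ℤ, 0 ≤ mP2 p)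
    (v1 v2 : (I × ℤ) →₀ ℕ)
    (m1 m2 : (I × ℤ) →₀ ℤ)
    (hm1 : m1 = mP1 - v1.sum fun p n => (n : ℤ) • Amon C p.1 p.2)
    (hm2 : m2 = mP2 - v2.sum fun p n => (n : ℤ) • Amon C p.1 p.2) :
    ∑ᶠ p : I × ℤ, ((v1 (p.1, p.2 + 1) : ℤ) * m2 p + mP1 (p.1, p.2 + 1) * (v2 p : ℤ))
      = ∑ᶠ p : I × ℤ, (m1 p * (v2 (p.1, p.2 - 1) : ℤ) + (v1 p : ℤ) * mP2 (p.1, p.2 - 1)) :=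
  d_well_defined_general C hsym mP1 mP2 v1 v2 m1 m2 hm1 hm2
end

section
/- Let m_{P¹}, m_{P²} be l-dominant monomials and v¹, v² : I × ℤ → ℕ finitely supported, and set m¹ = m_{P¹} − ∑_{(i,s)} v¹(i,s)·A_{i,s} and m² = m_{P²} − ∑_{(i,s)} v²(i,s)·A_{i,s}. Then ε(m¹, m²) = d(m¹, m_{P¹}; m², m_{P²}) − d(m², m_{P²}; m¹, m_{P¹}) + ε(m_{P¹}, m_{P²}). -/
open Finsupp

/-- `IsUtilde C m t` says that `t = ũ(m)`: it vanishes for all sufficiently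
small second arguments and satisfies
`m (i,s) = t (i,s-1) + t (i,s+1) + ∑_{j ≠ i} (C i j) t (j,s)` for all `(i,s)`.
(Such a `t` exists and is unique.) -/
def IsUtilde {I : Type*} [Fintype I] [DecidableEq I]
    (C : I → I → ℤ) (m : (I × ℤ) →₀ ℤ) (t : I × ℤ → ℤ) : Prop :=
  (∃ N : ℤ, ∀ i : I, ∀ s : ℤ, s ≤ N → t (i, s) = 0) ∧
  (∀ i : I, ∀ s : ℤ,
    m (i, s) = t (i, s - 1) + t (i, s + 1) +
      ∑ j ∈ Finset.univ.erase i, C i j * t (j, s))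

/-- `dtil a tb = d̃(a, b) = -∑ a(i,s+1)·ũ(b)(i,s)`, where `tb = ũ(b)`. -/
noncomputable def dtil {I : Type*} (a : (I × ℤ) →₀ ℤ) (tb : I × ℤ → ℤ) : ℤ :=
  - ∑ᶠ p : I × ℤ, a (p.1, p.2 + 1) * tb p

/-- `dd v1 mP1 m2 v2 = d(m¹, m_{P¹}; m², m_{P²})
  = ∑ (v¹(i,s+1)·m²(i,s) + m_{P¹}(i,s+1)·v²(i,s))`. -/
noncomputable def dd {I : Type*} (v1 : (I × ℤ) →₀ ℕ) (mP1 m2 : (I × ℤ) →₀ ℤ)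
    (v2 : (I × ℤ) →₀ ℕ) : ℤ :=
  ∑ᶠ p : I × ℤ, ((v1 (p.1, p.2 + 1) : ℤ) * m2 p + mP1 (p.1, p.2 + 1) * (v2 p : ℤ))

namespace EpsAux

noncomputable def P {I : Type*} (a : (I × ℤ) →₀ ℤ) (f : I × ℤ → ℤ) : ℤ :=
  ∑ᶠ p : I × ℤ, a (p.1, p.2 + 1) * f p

lemma Psupp {I : Type*} (a : (I × ℤ) →₀ ℤ) (f : I × ℤ → ℤ) :
    (Function.support fun p : I × ℤ => a (p.1, p.2 + 1) * f p).Finite := by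
  apply Set.Finite.subset ((a.support.finite_toSet).image fun q : I × ℤ => (q.1, q.2 - 1))
  intro p hp
  have ha : a (p.1, p.2 + 1) ≠ 0 := by
    intro h
    apply hp
    simp [h]
  exact ⟨(p.1, p.2 + 1), Finsupp.mem_support_iff.mpr ha, by simp⟩

noncomputable def Phom {I : Type*} (f : I × ℤ → ℤ) : ((I × ℤ) →₀ ℤ) →+ ℤ where
  toFun a := P a f
  map_zero' := by simp [P]
  map_add' a b := by
    show P (a + b) f = P a f + P b f
    unfold P
    rw [← finsum_add_distrib (Psupp a f) (Psupp b f)]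
    exact finsum_congr fun p => by simp [add_mul]

lemma P_single {I : Type*} (q : I × ℤ) (c : ℤ) (f : I × ℤ → ℤ) :
    P (Finsupp.single q c) f = c * f (q.1, q.2 - 1) := by
  unfold P
  rw [finsum_eq_single _ (q.1, q.2 - 1)]
  · rw [show ((q.1 : I), q.2 - 1 + 1) = q from by rw [Prod.ext_iff]; constructor <;> simp,
      Finsupp.single_eq_same]
  · intro p hp
    rw [Finsupp.single_eq_of_ne', zero_mul]
    intro h
    apply hp
    rw [Prod.ext_iff] at h ⊢
    obtain ⟨h1, h2⟩ := h
    exact ⟨h1.symm, by omega⟩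

lemma P_eq_sum {I : Type*} (a : (I × ℤ) →₀ ℤ) (f : I × ℤ → ℤ) :
    P a f = ∑ q ∈ a.support, a q * f (q.1, q.2 - 1) := by
  conv_lhs => rw [← Finsupp.sum_single a]
  rw [show P (a.sum Finsupp.single) f = Phom f (a.sum Finsupp.single) from rfl,
    Finsupp.sum, map_sum]
  exact Finset.sum_congr rfl fun q _ => P_single q (a q) f

lemma P_sub_left {I : Type*} (a b : (I × ℤ) →₀ ℤ) (f : I × ℤ → ℤ) :
    P (a - b) f = P a f - P b f := (Phom f).map_sub a b

lemma P_sub_right {I : Type*} (a : (I × ℤ) →₀ ℤ) (f g : I × ℤ → ℤ) :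
    P a (fun p => f p - g p) = P a f - P a g := by
  unfold P
  rw [← finsum_sub_distrib (Psupp a f) (Psupp a g)]
  exact finsum_congr fun p => by ring

lemma P_coe_sub {I : Type*} (a x y : (I × ℤ) →₀ ℤ) :
    P a ⇑(x - y) = P a ⇑x - P a ⇑y := by
  rw [show ⇑(x - y) = fun p => x p - y p from by ext p; simp]
  exact P_sub_right a x y

end EpsAux

namespace EpsAux
variable {I : Type*} [Fintype I] [DecidableEq I]

lemma Amon_apply (C : I → I → ℤ) (k : I) (t : ℤ) (i : I) (s : ℤ) :
    Amon C k t (i, s)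
      = (if i = k ∧ s = t + 1 then 1 else 0) + (if i = k ∧ s = t - 1 then 1 else 0)
        + (if i ≠ k ∧ s = t then C i k else 0) := by
  rw [Amon, Finsupp.add_apply, Finsupp.add_apply, Finsupp.finset_sum_apply]
  congr 1
  · congr 1
    · rw [Finsupp.single_apply]
      congr 1
      simp [Prod.ext_iff]
      constructor
      · rintro ⟨h1, h2⟩; exact ⟨h1.symm, h2.symm⟩
      · rintro ⟨h1, h2⟩; exact ⟨h1.symm, h2.symm⟩
    · rw [Finsupp.single_apply]
      congr 1
      simp [Prod.ext_iff]
      constructor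
      · rintro ⟨h1, h2⟩; exact ⟨h1.symm, h2.symm⟩
      · rintro ⟨h1, h2⟩; exact ⟨h1.symm, h2.symm⟩
  · simp only [Finsupp.single_apply, Prod.mk.injEq]
    by_cases hts : s = t
    · subst hts
      simp only [and_true, eq_self_iff_true]
      rw [Finset.sum_ite_eq' (Finset.univ.erase k) i fun j => C j k]
      simp [Finset.mem_erase, and_comm]
    · rw [Finset.sum_eq_zero fun j _ => by
        simp only [ite_eq_right_iff, and_imp]
        exact fun _ h => absurd h.symm hts]
      simp [hts]

end EpsAux

namespace EpsAux
variable {I : Type*} [Fintype I] [DecidableEq I]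

lemma Av_single_apply (C : I → I → ℤ) (k : I) (t : ℤ) (n : ℕ) (i : I) (s : ℤ) :
    (n : ℤ) * Amon C k t (i, s)
      = (Finsupp.single (k, t) n (i, s - 1) : ℤ) + (Finsupp.single (k, t) n (i, s + 1) : ℤ)
        + ∑ j ∈ Finset.univ.erase i, C i j * (Finsupp.single (k, t) n (j, s) : ℤ) := by
  have hsum : (∑ j ∈ Finset.univ.erase i, C i j * ((Finsupp.single (k, t) n (j, s) : ℕ) : ℤ))
      = if k ≠ i ∧ t = s then C i k * n else 0 := by
    by_cases hts : t = s
    · subst hts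
      rw [Finset.sum_congr rfl (fun j hj =>
        show C i j * ((Finsupp.single (k, t) n (j, t) : ℕ) : ℤ)
            = if k = j then C i j * n else 0 from by
          rw [Finsupp.single_apply]
          by_cases h : k = j <;> simp [h, Prod.ext_iff])]
      rw [Finset.sum_ite_eq (Finset.univ.erase i) k fun j => C i j * (n : ℤ)]
      simp [Finset.mem_erase]
    · rw [Finset.sum_eq_zero fun j hj => by
        rw [Finsupp.single_apply, if_neg (by simp [Prod.ext_iff, hts]), Nat.cast_zero, mul_zero]]
      simp [hts]
  rw [hsum, Amon_apply]
  clear hsum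
  rw [Finsupp.single_apply, Finsupp.single_apply]
  simp only [Prod.mk.injEq]
  by_cases hik : i = k <;> by_cases h1 : s = t + 1 <;> by_cases h2 : s = t - 1 <;>
    by_cases h3 : s = t <;>
    first
    | omega
    | (simp only [hik, h1, h2, h3, if_pos, if_neg, and_true, and_false, true_and, false_and,
        ne_eq, not_true_eq_false, not_false_eq_true, if_true, if_false, ite_true, ite_false,
        eq_self_iff_true, Nat.cast_zero, Nat.cast_ite]
       split_ifs <;> try omega
       all_goals try ring
       all_goals (simp_all; try ring; try omega))
end EpsAux

namespace EpsAux
variable {I : Type*} [Fintype I] [DecidableEq I]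

lemma Av_apply (C : I → I → ℤ) (v : (I × ℤ) →₀ ℕ) (i : I) (s : ℤ) :
    (v.sum fun q n => (n : ℤ) • Amon C q.1 q.2) (i, s)
      = (v (i, s - 1) : ℤ) + (v (i, s + 1) : ℤ)
        + ∑ j ∈ Finset.univ.erase i, C i j * (v (j, s) : ℤ) := by
  induction v using Finsupp.induction with
  | zero => simp
  | single_add q n f hq hn ih =>
      rw [Finsupp.sum_add_index' (fun a => by simp) (fun a b₁ b₂ => by push_cast; rw [add_smul]),
        Finsupp.sum_single_index (by simp), Finsupp.add_apply, ih,
        Finsupp.smul_apply, smul_eq_mul]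
      obtain ⟨k, t⟩ := q
      rw [Av_single_apply C k t n i s]
      simp only [Finsupp.add_apply]
      push_cast
      rw [Finset.sum_congr rfl (fun x _ => mul_add (C i x) ((Finsupp.single (k, t) n (x, s) : ℕ) : ℤ) ((f (x, s) : ℕ) : ℤ)), Finset.sum_add_distrib]
      ring

lemma exists_bound (v : (I × ℤ) →₀ ℕ) :
    ∃ N : ℤ, ∀ i : I, ∀ s : ℤ, s ≤ N → v (i, s) = 0 := by
  have hfin : (↑(v.support.image Prod.snd) : Set ℤ).Finite := Finset.finite_toSet _
  obtain ⟨b, hb⟩ := hfin.bddBelow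
  refine ⟨b - 1, fun i s hs => ?_⟩
  by_contra h
  have h1 : (i, s) ∈ v.support := Finsupp.mem_support_iff.mpr h
  have h2 : s ∈ v.support.image Prod.snd := Finset.mem_image_of_mem Prod.snd h1
  have h3 : b ≤ s := hb (by exact_mod_cast h2)
  omega

lemma isUtilde_Av (C : I → I → ℤ) (v : (I × ℤ) →₀ ℕ) :
    IsUtilde C (v.sum fun q n => (n : ℤ) • Amon C q.1 q.2) (fun p => (v p : ℤ)) := by
  constructor
  · obtain ⟨N, hN⟩ := exists_bound v
    exact ⟨N, fun i s hs => by simp [hN i s hs]⟩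
  · intro i s
    exact Av_apply C v i s

lemma isUtilde_sub {C : I → I → ℤ} {a b : (I × ℤ) →₀ ℤ} {ta tb : I × ℤ → ℤ}
    (ha : IsUtilde C a ta) (hb : IsUtilde C b tb) :
    IsUtilde C (a - b) (fun p => ta p - tb p) := by
  obtain ⟨⟨Na, hNa⟩, hra⟩ := ha
  obtain ⟨⟨Nb, hNb⟩, hrb⟩ := hb
  refine ⟨⟨min Na Nb, fun i s hs => by
    show ta (i, s) - tb (i, s) = 0
    rw [hNa i s (le_trans hs (min_le_left _ _)), hNb i s (le_trans hs (min_le_right _ _)),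
      sub_zero]⟩, fun i s => ?_⟩
  show (a - b) (i, s) = (ta (i, s - 1) - tb (i, s - 1)) + (ta (i, s + 1) - tb (i, s + 1))
    + ∑ j ∈ Finset.univ.erase i, C i j * (ta (j, s) - tb (j, s))
  rw [Finsupp.sub_apply, hra i s, hrb i s]
  rw [Finset.sum_congr rfl fun j _ => mul_sub (C i j) (ta (j, s)) (tb (j, s))]
  rw [Finset.sum_sub_distrib]
  ring

lemma isUtilde_unique {C : I → I → ℤ} {m : (I × ℤ) →₀ ℤ} {t t' : I × ℤ → ℤ}
    (h : IsUtilde C m t) (h' : IsUtilde C m t') : t = t' := by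
  obtain ⟨⟨N, hN⟩, hr⟩ := h
  obtain ⟨⟨N', hN'⟩, hr'⟩ := h'
  set M := min N N' with hM
  have key : ∀ n : ℕ, ∀ i : I, ∀ s : ℤ, s ≤ M + n → t (i, s) = t' (i, s) := by
    intro n
    induction n with
    | zero =>
        intro i s hs
        rw [hN i s (by omega), hN' i s (by omega)]
    | succ n ih =>
        intro i s hs
        rcases le_or_gt s (M + n) with hc | hc
        · exact ih i s hc
        · have e1 := hr i (s - 1)
          have e2 := hr' i (s - 1)
          have ht2 : t (i, s - 1 - 1) = t' (i, s - 1 - 1) := ih i _ (by omega)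
          have hsum : ∑ j ∈ Finset.univ.erase i, C i j * t (j, s - 1)
              = ∑ j ∈ Finset.univ.erase i, C i j * t' (j, s - 1) :=
            Finset.sum_congr rfl fun j _ => by rw [ih j (s - 1) (by omega)]
          have hmain : t (i, s - 1 + 1) = t' (i, s - 1 + 1) := by
            have he := e1.symm.trans e2
            rw [ht2, hsum] at he
            linarith
          rw [show (s : ℤ) = s - 1 + 1 from by ring]
          exact hmain
  funext p
  obtain ⟨i, s⟩ := p
  exact key (s - M).toNat i s (by omega)

end EpsAux


namespace EpsAux
variable {I : Type*} [Fintype I] [DecidableEq I]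

noncomputable def toZ (v : (I × ℤ) →₀ ℕ) : (I × ℤ) →₀ ℤ :=
  v.mapRange Nat.cast Nat.cast_zero

lemma toZ_apply (v : (I × ℤ) →₀ ℕ) (p : I × ℤ) : toZ v p = (v p : ℤ) :=
  Finsupp.mapRange_apply

lemma toZ_support (v : (I × ℤ) →₀ ℕ) : (toZ v).support = v.support :=
  Finsupp.support_mapRange_of_injective Nat.cast_zero v Nat.cast_injective

lemma P_Amon (C : I → I → ℤ) (i : I) (s : ℤ) (f : I × ℤ → ℤ) :
    P (Amon C i s) f
      = f (i, s) + f (i, s - 2) + ∑ j ∈ Finset.univ.erase i, C j i * f (j, s - 1) := by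
  show Phom f (Amon C i s) = _
  rw [Amon, map_add, map_add, map_sum]
  have h1 : Phom f (Finsupp.single (i, s + 1) 1) = f (i, s) := by
    show P (Finsupp.single (i, s + 1) 1) f = f (i, s)
    rw [P_single]
    norm_num
  have h2 : Phom f (Finsupp.single (i, s - 1) 1) = f (i, s - 2) := by
    show P (Finsupp.single (i, s - 1) 1) f = f (i, s - 2)
    rw [P_single]
    rw [show s - 1 - 1 = s - 2 from by ring, one_mul]
  rw [h1, h2]
  congr 1
  exact Finset.sum_congr rfl fun j _ => P_single (j, s) (C j i) f

lemma P_Amon_utilde {C : I → I → ℤ} (hsym : ∀ i j, C i j = C j i)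
    {mP : (I × ℤ) →₀ ℤ} {tP : I × ℤ → ℤ} (h : IsUtilde C mP tP) (i : I) (s : ℤ) :
    P (Amon C i s) tP = mP (i, s - 1) := by
  rw [P_Amon, h.2 i (s - 1), show s - 1 - 1 = s - 2 from by ring,
    show s - 1 + 1 = s from by ring]
  rw [Finset.sum_congr rfl fun j _ => by rw [hsym j i]]
  ring

lemma P_Av (C : I → I → ℤ) (v : (I × ℤ) →₀ ℕ) (f : I × ℤ → ℤ) :
    P (v.sum fun q n => (n : ℤ) • Amon C q.1 q.2) f
      = ∑ q ∈ v.support, (v q : ℤ) * P (Amon C q.1 q.2) f := by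
  show Phom f _ = _
  rw [Finsupp.sum, map_sum]
  refine Finset.sum_congr rfl fun q _ => ?_
  rw [map_zsmul]
  rfl

lemma P_Av_utilde {C : I → I → ℤ} (hsym : ∀ i j, C i j = C j i) (v : (I × ℤ) →₀ ℕ)
    {mP : (I × ℤ) →₀ ℤ} {tP : I × ℤ → ℤ} (h : IsUtilde C mP tP) :
    P (v.sum fun q n => (n : ℤ) • Amon C q.1 q.2) tP = P (toZ v) ⇑mP := by
  rw [P_Av, P_eq_sum, toZ_support]
  exact Finset.sum_congr rfl fun q _ => by rw [toZ_apply, P_Amon_utilde hsym h]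

noncomputable def gfun (C : I → I → ℤ) (w : (I × ℤ) →₀ ℕ) (q : I × ℤ) : ℤ :=
  (w q : ℤ) + (w (q.1, q.2 - 2) : ℤ)
    + ∑ j ∈ Finset.univ.erase q.1, C q.1 j * (w (j, q.2 - 1) : ℤ)

lemma claimA {C : I → I → ℤ} (hsym : ∀ i j, C i j = C j i) (w v : (I × ℤ) →₀ ℕ) :
    P (w.sum fun q n => (n : ℤ) • Amon C q.1 q.2) (fun p => (v p : ℤ))
      = ∑ q ∈ w.support, (w q : ℤ) * gfun C v q := by
  rw [P_Av]
  refine Finset.sum_congr rfl fun q _ => ?_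
  rw [P_Amon, gfun, Prod.mk.eta]
  have hs : ∑ j ∈ Finset.univ.erase q.1, C j q.1 * ((v (j, q.2 - 1) : ℕ) : ℤ)
      = ∑ j ∈ Finset.univ.erase q.1, C q.1 j * ((v (j, q.2 - 1) : ℕ) : ℤ) :=
    Finset.sum_congr rfl fun j _ => by rw [hsym j q.1]
  rw [hs]

lemma claimB (C : I → I → ℤ) (v w : (I × ℤ) →₀ ℕ) :
    P (toZ v) ⇑(w.sum fun q n => (n : ℤ) • Amon C q.1 q.2)
      = ∑ q ∈ v.support, (v q : ℤ) * gfun C w q := by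
  rw [P_eq_sum, toZ_support]
  refine Finset.sum_congr rfl fun q _ => ?_
  rw [toZ_apply, Av_apply C w q.1 (q.2 - 1), gfun,
    show q.2 - 1 - 1 = q.2 - 2 from by ring, show q.2 - 1 + 1 = q.2 from by ring,
    Prod.mk.eta]
  ring

lemma Bsym {C : I → I → ℤ} (hsym : ∀ i j, C i j = C j i) (v1 v2 : (I × ℤ) →₀ ℕ) :
    P (v1.sum fun q n => (n : ℤ) • Amon C q.1 q.2) (fun p => (v2 p : ℤ))
      + P (toZ v2) ⇑(v1.sum fun q n => (n : ℤ) • Amon C q.1 q.2)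
    = P (v2.sum fun q n => (n : ℤ) • Amon C q.1 q.2) (fun p => (v1 p : ℤ))
      + P (toZ v1) ⇑(v2.sum fun q n => (n : ℤ) • Amon C q.1 q.2) := by
  rw [claimA hsym v1 v2, claimB C v2 v1, claimA hsym v2 v1, claimB C v1 v2]
  ring

lemma dtil_eq (a : (I × ℤ) →₀ ℤ) (tb : I × ℤ → ℤ) : dtil a tb = -(P a tb) := rfl

lemma dd_eq (v1 : (I × ℤ) →₀ ℕ) (mP1 m2 : (I × ℤ) →₀ ℤ) (v2 : (I × ℤ) →₀ ℕ) :
    dd v1 mP1 m2 v2 = P (toZ v1) ⇑m2 + P mP1 (fun p => (v2 p : ℤ)) := by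
  unfold dd P
  rw [← finsum_add_distrib (Psupp (toZ v1) ⇑m2) (Psupp mP1 (fun p => (v2 p : ℤ)))]
  exact finsum_congr fun p => by rw [toZ_apply]

end EpsAux

/-- `ε(m¹, m²) = d(m¹,m_{P¹}; m²,m_{P²}) - d(m²,m_{P²}; m¹,m_{P¹}) + ε(m_{P¹},m_{P²})`,
where `ε(m¹, m²) = d̃(m¹, m²) - d̃(m², m¹)`. -/
theorem eps_eq {I : Type*} [Fintype I] [DecidableEq I]
    (C : I → I → ℤ)
    (hsym : ∀ i j, C i j = C j i)
    (hdiag : ∀ i, C i i = 2)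
    (hoff : ∀ i j, i ≠ j → C i j = 0 ∨ C i j = -1)
    (mP1 mP2 : (I × ℤ) →₀ ℤ)
    (hP1 : ∀ p : I × ℤ, 0 ≤ mP1 p) (hP2 : ∀ p : I × ℤ, 0 ≤ mP2 p)
    (v1 v2 : (I × ℤ) →₀ ℕ)
    (m1 m2 : (I × ℤ) →₀ ℤ)
    (hm1 : m1 = mP1 - v1.sum fun p n => (n : ℤ) • Amon C p.1 p.2)
    (hm2 : m2 = mP2 - v2.sum fun p n => (n : ℤ) • Amon C p.1 p.2)
    (tm1 tm2 tP1 tP2 : I × ℤ → ℤ)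
    (htm1 : IsUtilde C m1 tm1) (htm2 : IsUtilde C m2 tm2)
    (htP1 : IsUtilde C mP1 tP1) (htP2 : IsUtilde C mP2 tP2) :
    dtil m1 tm2 - dtil m2 tm1
      = dd v1 mP1 m2 v2 - dd v2 mP2 m1 v1 + (dtil mP1 tP2 - dtil mP2 tP1) := by
  subst hm1 hm2
  have htm1' : tm1 = fun p => tP1 p - (v1 p : ℤ) :=
    EpsAux.isUtilde_unique htm1 (EpsAux.isUtilde_sub htP1 (EpsAux.isUtilde_Av C v1))
  have htm2' : tm2 = fun p => tP2 p - (v2 p : ℤ) :=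
    EpsAux.isUtilde_unique htm2 (EpsAux.isUtilde_sub htP2 (EpsAux.isUtilde_Av C v2))
  have e1 := EpsAux.P_Av_utilde hsym v1 htP2
  have e2 := EpsAux.P_Av_utilde hsym v2 htP1
  have hB := EpsAux.Bsym hsym v1 v2
  rw [htm1', htm2', EpsAux.dtil_eq, EpsAux.dtil_eq, EpsAux.dtil_eq, EpsAux.dtil_eq,
    EpsAux.dd_eq, EpsAux.dd_eq]
  simp only [EpsAux.P_sub_left, EpsAux.P_sub_right, EpsAux.P_coe_sub]
  linear_combination e1 - e2 - hB
end

section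
/- Fix i ∈ I, an integer k ≥ 1 and an integer s with 0 ≤ s ≤ k−1. Let m_P be the monomial with m_P(i,2t) = 1 for 0 ≤ t ≤ k−1 and m_P = 0 at all other arguments, and set m = m_P − ∑_{t=s+1}^{k} A_{i,2t−1}. Then the monomial m + 𝟙_{(i,2k)} (i.e. the product m·Y_{i,q^{2k}}) is l-dominant if and only if s = k−1. -/
/-
The `i`-row of `∑_{t ∈ S} A_{i,2t-1}` at `2u` counts `[u ∈ S] + [u+1 ∈ S]`. If `s < k - 1`, then
at `(i, 2s+2)` the factor `Y_{i,q^{2s+2}}` of `m_P` is cancelled twice, by `A_{i,2s+1}` and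
`A_{i,2s+3}`, leaving exponent `-1`. If `s = k - 1`, only `A_{i,2k-1}` is removed; it cancels
`Y_{i,q^{2k-2}} Y_{i,q^{2k}}` exactly and leaves the factors `Y_{j,q^{2k-1}}^{-C j i}` with
nonnegative exponents.
-/

open Finsupp

section
variable {I : Type*} [DecidableEq I] (i : I)

lemma single_apply_self_right (a b v : ℤ) :
    single ((i, a) : I × ℤ) v (i, b) = if a = b then v else 0 := by
  simp [single_apply]

lemma sum_single_two_mul_apply (S : Finset ℤ) (u : ℤ) :
    (∑ t ∈ S, single ((i, 2 * t) : I × ℤ) (1 : ℤ)) (i, 2 * u) = if u ∈ S then 1 else 0 := by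
  simp [finsetSum_apply, single_apply_self_right]

variable [Fintype I] (C : I → I → ℤ)

lemma Amon_apply_self (u r : ℤ) :
    Amon C i u (i, r) = (if u + 1 = r then 1 else 0) + (if u - 1 = r then 1 else 0) := by
  have hrow : (∑ j ∈ Finset.univ.erase i, single (j, u) (C j i)) (i, r) = 0 := by
    rw [finsetSum_apply]
    exact Finset.sum_eq_zero fun j hj ↦ by simp [Finset.ne_of_mem_erase hj]
  rw [Amon, Finsupp.add_apply, Finsupp.add_apply, hrow, add_zero, single_apply_self_right,
    single_apply_self_right]

lemma sum_Amon_two_mul_sub_one_apply (S : Finset ℤ) (u : ℤ) :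
    (∑ t ∈ S, Amon C i (2 * t - 1)) (i, 2 * u) =
      (if u ∈ S then 1 else 0) + (if u + 1 ∈ S then 1 else 0) := by
  have hup : ∀ t : ℤ, 2 * t - 1 + 1 = 2 * u ↔ t = u := by omega
  have hdown : ∀ t : ℤ, 2 * t - 1 - 1 = 2 * u ↔ t = u + 1 := by omega
  simp only [finsetSum_apply, Amon_apply_self, Finset.sum_add_distrib, hup, hdown,
    Finset.sum_ite_eq']

lemma sum_Icc_single_sub_Amon_add_single (k : ℤ) (hk : 0 ≤ k - 1) :
    (∑ t ∈ Finset.Icc 0 (k - 1), single ((i, 2 * t) : I × ℤ) (1 : ℤ)) - Amon C i (2 * k - 1) +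
        single (i, 2 * k) 1 =
      ∑ t ∈ Finset.Ico 0 (k - 1), single ((i, 2 * t) : I × ℤ) (1 : ℤ) -
        ∑ j ∈ Finset.univ.erase i, single (j, 2 * k - 1) (C j i) := by
  rw [← Finset.Ico_insert_right hk, Finset.sum_insert Finset.right_notMem_Ico, Amon,
    show 2 * k - 1 + 1 = 2 * k by ring, show 2 * k - 1 - 1 = 2 * (k - 1) by ring]
  abel

end

theorem KR_monomial_lDominant_iff_general {I : Type*} [Fintype I] [DecidableEq I]
    (C : I → I → ℤ)
    (hoff : ∀ i j, i ≠ j → C i j = 0 ∨ C i j = -1)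
    (i : I) (k s : ℤ) (hs0 : 0 ≤ s) (hs : s ≤ k - 1)
    (mP m : (I × ℤ) →₀ ℤ)
    (hmP : mP = ∑ t ∈ Finset.Icc (0 : ℤ) (k - 1), Finsupp.single (i, 2 * t) 1)
    (hm : m = mP - ∑ t ∈ Finset.Icc (s + 1) k, Amon C i (2 * t - 1)) :
    (∀ p : I × ℤ, 0 ≤ ((m + Finsupp.single (i, 2 * k) 1 : (I × ℤ) →₀ ℤ)) p) ↔ s = k - 1 := by
  subst hmP hm
  constructor
  · intro hdom
    by_contra hne
    have hval := hdom (i, 2 * (s + 1))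
    rw [Finsupp.add_apply, Finsupp.sub_apply, sum_single_two_mul_apply,
      sum_Amon_two_mul_sub_one_apply, single_apply_self_right] at hval
    simp only [Finset.mem_Icc] at hval
    split_ifs at hval <;> omega
  · rintro rfl
    have hCoff : ∀ j ∈ Finset.univ.erase i, C j i ≤ 0 := fun j hj ↦ by
      rcases hoff j i (Finset.ne_of_mem_erase hj) with h | h <;> omega
    rw [sub_add_cancel, Finset.Icc_self, Finset.sum_singleton,
      sum_Icc_single_sub_Amon_add_single i C k hs0]
    refine Finsupp.le_def.1 (sub_nonneg_of_le ?_)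
    exact (Finset.sum_nonpos fun j hj ↦ single_nonpos.2 (hCoff j hj)).trans
      (Finset.sum_nonneg fun t _ ↦ single_nonneg.2 zero_le_one)

/-- For `0 ≤ s ≤ k-1` and
`m = Y_{i,q^0} ⋯ Y_{i,q^{2k-2}} · ∏_{t=s+1}^{k} A_{i,q^{2t-1}}^{-1}`,
the monomial `m · Y_{i,q^{2k}}` is l-dominant iff `s = k - 1`. -/
theorem KR_monomial_lDominant_iff {I : Type*} [Fintype I] [DecidableEq I]
    (C : I → I → ℤ)
    (hsym : ∀ i j, C i j = C j i)
    (hdiag : ∀ i, C i i = 2)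
    (hoff : ∀ i j, i ≠ j → C i j = 0 ∨ C i j = -1)
    (i : I) (k s : ℤ) (hk : 1 ≤ k) (hs0 : 0 ≤ s) (hs : s ≤ k - 1)
    (mP m : (I × ℤ) →₀ ℤ)
    (hmP : mP = ∑ t ∈ Finset.Icc (0 : ℤ) (k - 1), Finsupp.single (i, 2 * t) 1)
    (hm : m = mP - ∑ t ∈ Finset.Icc (s + 1) k, Amon C i (2 * t - 1)) :
    (∀ p : I × ℤ, 0 ≤ ((m + Finsupp.single (i, 2 * k) 1 : (I × ℤ) →₀ ℤ)) p) ↔ s = k - 1 :=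
  KR_monomial_lDominant_iff_general C hoff i k s hs0 hs mP m hmP hm
end

section
/- Fix i ∈ I, an integer k ≥ 1 and an integer s with 0 ≤ s ≤ k−1. Let m_P be the monomial with m_P(i,2t) = 1 for 0 ≤ t ≤ k−1 and m_P = 0 elsewhere, let v¹ : I × ℤ → ℕ be the indicator function of the set {(i,2t−1) : s+1 ≤ t ≤ k}, and set m = m_P − ∑_{t=s+1}^{k} A_{i,2t−1}. Let m' = m_{P'} = 𝟙_{(i,2k)} (so the corresponding v² is zero). Then d(m, m_P; m', m_{P'}) = 0 and d(m', m_{P'}; m, m_P) = 1. -/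
/-!
With `m' = m_{P'} = Y_{i,q^{2k}}` and `v² = 0`, each pairing collapses to a single value of `v¹`:
`d(m, m_P; m', m_{P'}) = v¹(i, 2k+1) = 0` and `d(m', m_{P'}; m, m_P) = v¹(i, 2k-1) = 1`,
the latter because `t = k` lies in `[s+1, k]`.
-/

open Finsupp

section Indicator

variable {α ι M : Type*} [AddCommMonoid M]

theorem finsetSum_single_apply_of_forall_ne {f : ι → α} {S : Finset ι} {x : α} (b : M)
    (hx : ∀ t ∈ S, f t ≠ x) : (∑ t ∈ S, single (f t) b) x = 0 := by
  rw [finsetSum_apply]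
  exact Finset.sum_eq_zero fun t ht => single_eq_of_ne (hx t ht).symm

theorem finsetSum_single_apply_of_injective {f : ι → α} (hf : f.Injective) {S : Finset ι}
    {t : ι} (ht : t ∈ S) (b : M) : (∑ u ∈ S, single (f u) b) (f t) = b := by
  rw [finsetSum_apply, Finset.sum_eq_single_of_mem t ht, single_eq_same]
  intro u _ hut
  exact single_eq_of_ne (hf.ne hut).symm

end Indicator

section PairingWithSingle

variable {I : Type*}

theorem dd_single_zero (v : (I × ℤ) →₀ ℕ) (mP : (I × ℤ) →₀ ℤ) (q : I × ℤ) (c : ℤ) :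
    dd v mP (single q c) 0 = v (q.1, q.2 + 1) * c := by
  unfold dd
  rw [finsum_eq_single _ q fun p hp => by simp [single_eq_of_ne hp]]
  simp

theorem dd_zero_single (m : (I × ℤ) →₀ ℤ) (v : (I × ℤ) →₀ ℕ) (q : I × ℤ) (c : ℤ) :
    dd 0 (single q c) m v = c * v (q.1, q.2 - 1) := by
  unfold dd
  rw [finsum_eq_single _ (q.1, q.2 - 1) fun p hp => ?_]
  · simp
  · have hq : (p.1, p.2 + 1) ≠ q := fun h => hp (by rw [← h]; simp)
    simp [single_eq_of_ne hq]

end PairingWithSingle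

theorem d_values_general {I : Type*}
    (i : I) (k s : ℤ) (hs : s ≤ k - 1)
    (mP m mP' : (I × ℤ) →₀ ℤ) (v1 : (I × ℤ) →₀ ℕ)
    (hv1 : v1 = ∑ t ∈ Finset.Icc (s + 1) k, Finsupp.single (i, 2 * t - 1) (1 : ℕ))
    (hmP' : mP' = Finsupp.single (i, 2 * k) 1) :
    dd v1 mP mP' 0 = 0 ∧ dd 0 mP' m v1 = 1 := by
  have hinj : (fun t : ℤ => (i, 2 * t - 1)).Injective := fun t u h => by
    simp only [Prod.mk.injEq, true_and] at h; omega
  subst hv1 hmP'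
  constructor
  · rw [dd_single_zero, finsetSum_single_apply_of_forall_ne]
    · simp
    · intro t ht h
      simp only [Finset.mem_Icc, Prod.mk.injEq, true_and] at ht h
      omega
  · rw [dd_zero_single, finsetSum_single_apply_of_injective hinj (t := k) (by simp; omega)]
    simp

/-- For `0 ≤ s ≤ k-1`, `m_P = Y_{i,q^0} ⋯ Y_{i,q^{2k-2}}`,
`m = m_P · ∏_{t=s+1}^{k} A_{i,q^{2t-1}}^{-1}` and `m' = m_{P'} = Y_{i,q^{2k}}`,
one has `d(m, m_P; m', m_{P'}) = 0` and `d(m', m_{P'}; m, m_P) = 1`. -/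
theorem d_values {I : Type*} [Fintype I] [DecidableEq I]
    (C : I → I → ℤ)
    (hsym : ∀ i j, C i j = C j i)
    (hdiag : ∀ i, C i i = 2)
    (hoff : ∀ i j, i ≠ j → C i j = 0 ∨ C i j = -1)
    (i : I) (k s : ℤ) (hk : 1 ≤ k) (hs0 : 0 ≤ s) (hs : s ≤ k - 1)
    (mP m mP' : (I × ℤ) →₀ ℤ) (v1 : (I × ℤ) →₀ ℕ)
    (hmP : mP = ∑ t ∈ Finset.Icc (0 : ℤ) (k - 1), Finsupp.single (i, 2 * t) 1)
    (hv1 : v1 = ∑ t ∈ Finset.Icc (s + 1) k, Finsupp.single (i, 2 * t - 1) (1 : ℕ))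
    (hm : m = mP - ∑ t ∈ Finset.Icc (s + 1) k, Amon C i (2 * t - 1))
    (hmP' : mP' = Finsupp.single (i, 2 * k) 1) :
    dd v1 mP mP' 0 = 0 ∧ dd 0 mP' m v1 = 1 :=
  d_values_general i k s hs mP m mP' v1 hv1 hmP'
end
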